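/- Fix an integer q ≥ 2 and an alphabet Σ_q of size q. Let n, ℓ, p be integers with 2 ≤ p ≤ ℓ and n ≥ 2ℓ − p + 1. If a_q(n+1, ℓ, p) ≥ q^n (i.e., an ℓ-window p-least-period avoiding code of length n+1 with a single redundancy symbol exists), then ℓ ≥ log_q(n − 2ℓ + p) + p − 3.5 (an inequality of real numbers). -/

import Mathlib

/-- `p` is a period of the vector `s = (s_1, …, s_n)` (0-indexed here):
`s_i = s_{i+p}` for all valid indices. -/
def IsPeriod {α : Type*} {n : ℕ} (s : Fin n → α) (p : ℕ) : Prop :=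
  ∀ i : ℕ, ∀ h : i + p < n,
    s ⟨i, lt_of_le_of_lt (Nat.le_add_right i p) h⟩ = s ⟨i + p, h⟩

/-- The window of length `ℓ` of `s` starting at (0-indexed) position `i`. -/
def window {α : Type*} {n : ℕ} (s : Fin n → α) (i ℓ : ℕ) (h : i + ℓ ≤ n) :
    Fin ℓ → α :=
  fun j => s ⟨i + j, Nat.lt_of_lt_of_le (Nat.add_lt_add_left j.isLt i) h⟩

/-- `s` is an `ℓ`-window `p`-least-period avoiding vector: no window of
length `ℓ` has any period `p'` with `1 ≤ p' < p`. -/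
def LPAvoiding {α : Type*} {n : ℕ} (ℓ p : ℕ) (s : Fin n → α) : Prop :=
  ∀ i : ℕ, ∀ h : i + ℓ ≤ n, ∀ p', 1 ≤ p' → p' < p →
    ¬ IsPeriod (window s i ℓ h) p'

/-- `s` is an `ℓ`-window `p`-period avoiding vector: no window of
length `ℓ` has period `p`. -/
def PAvoiding {α : Type*} {n : ℕ} (ℓ p : ℕ) (s : Fin n → α) : Prop :=
  ∀ i : ℕ, ∀ h : i + ℓ ≤ n, ¬ IsPeriod (window s i ℓ h) p

/-- `s` satisfies the `k`-RLL constraint w.r.t. the zero symbol `z`: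
no window of length `k` consists entirely of `z`. -/
def RLLok {α : Type*} {n : ℕ} (z : α) (k : ℕ) (s : Fin n → α) : Prop :=
  ∀ i : ℕ, ∀ h : i + k ≤ n, ∃ j : Fin k, window s i k h j ≠ z

/-!
Write `d = p - 1` and `t = ℓ - d`. A word of length `N` in which no window of length `ℓ` has
period `d` is determined by its first `d` symbols together with a "difference word" of length
`N - d` containing no run of `t` copies of a fixed letter `z`. Cutting such a run-limited word at
its first letter other than `z` shows that their number `R(m)` satisfies
`R(m) ≤ (q - 1) ∑_{k<t} R(m - 1 - k)`, whence `R(m) ≤ 2 λᵐ` with `λ = q (1 - q⁻⁽ᵗ⁺¹⁾)`.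
Hence `qⁿ ≤ q^d · 2 λ^(n-d+1)`, and comparing growth rates forces
`n - d ≤ q^(t+1) log (2q) ≤ q^(t+2)`, i.e. `log_q (n - 2ℓ + p) ≤ ℓ - p + 3`.
-/

section Encoding

variable {α : Type*} [DecidableEq α] {N : ℕ}

/-- The `j`-th letter is `z` exactly when `s (j + d) = s j`, and since `Equiv.swap (s j) z` is an
involution, `s (j + d)` can be read back from it and `s j`. -/
def diffWord (z : α) (d : ℕ) (s : Fin N → α) : Fin (N - d) → α :=
  fun j => Equiv.swap (s ⟨j, by omega⟩) z (s ⟨j + d, by omega⟩)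

theorem PAvoiding.rllOk_diffWord {ℓ d : ℕ} {s : Fin N → α} (hs : PAvoiding ℓ d s)
    (hdℓ : d < ℓ) (z : α) : RLLok z (ℓ - d) (diffWord z d s) := by
  intro i hi
  have hiℓ : i + ℓ ≤ N := by omega
  obtain ⟨j, hj, hne⟩ : ∃ j, ∃ hj : j + d < ℓ,
      window s i ℓ hiℓ ⟨j, by omega⟩ ≠ window s i ℓ hiℓ ⟨j + d, hj⟩ := by
    simpa [IsPeriod] using hs i hiℓ
  refine ⟨⟨j, by omega⟩, fun hz => hne ?_⟩
  simp only [window, diffWord, Equiv.swap_apply_eq_iff, Equiv.swap_apply_right] at hz ⊢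
  simpa only [add_assoc] using hz.symm

theorem apply_eq_swap_diffWord (z : α) {d : ℕ} (s : Fin N → α) {j : ℕ} (hdj : d ≤ j)
    (hj : j < N) :
    s ⟨j, hj⟩ = Equiv.swap (s ⟨j - d, by omega⟩) z (diffWord z d s ⟨j - d, by omega⟩) := by
  simp only [diffWord, Nat.sub_add_cancel hdj, Equiv.swap_apply_self]

theorem injective_prefix_diffWord (z : α) {d : ℕ} (hd : 0 < d) (hdN : d ≤ N) :
    Function.Injective fun s : Fin N → α =>
      ((fun i : Fin d => s ⟨i, by omega⟩), diffWord z d s) := by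
  intro s s' h
  simp only [Prod.mk.injEq] at h
  obtain ⟨hpre, hdiff⟩ := h
  suffices ∀ j (hj : j < N), s ⟨j, hj⟩ = s' ⟨j, hj⟩ from funext fun j => this j j.2
  intro j
  induction j using Nat.strong_induction_on with
  | _ j ih =>
    intro hj
    rcases lt_or_ge j d with hjd | hdj
    · exact congrFun hpre ⟨j, hjd⟩
    · rw [apply_eq_swap_diffWord z s hdj, apply_eq_swap_diffWord z s' hdj, hdiff,
        ih (j - d) (by omega)]

theorem card_pAvoiding_le [Fintype α] (z : α) {ℓ d : ℕ} (hd : 0 < d) (hdℓ : d < ℓ)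
    (hdN : d ≤ N) :
    Nat.card {s : Fin N → α // PAvoiding ℓ d s} ≤
      Fintype.card α ^ d * Nat.card {v : Fin (N - d) → α // RLLok z (ℓ - d) v} := by
  calc Nat.card {s : Fin N → α // PAvoiding ℓ d s}
      ≤ Nat.card ((Fin d → α) × {v : Fin (N - d) → α // RLLok z (ℓ - d) v}) :=
        Nat.card_le_card_of_injective
          (fun s => ((fun i : Fin d => s.1 ⟨i, by omega⟩), ⟨_, s.2.rllOk_diffWord hdℓ z⟩))
          fun s s' h => Subtype.ext <| injective_prefix_diffWord z hd hdN <| by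
            simpa only [Prod.mk.injEq, Subtype.mk.injEq] using h
    _ = _ := by
      rw [Nat.card_prod, Nat.card_eq_fintype_card, Fintype.card_fun, Fintype.card_fin]

end Encoding

section RunLength

variable {α : Type*} {m : ℕ}

theorem RLLok.window {z : α} {t : ℕ} {v : Fin m → α} (hv : RLLok z t v) (o m' : ℕ)
    (h : o + m' ≤ m) : RLLok z t (window v o m' h) := by
  intro i hi
  obtain ⟨j, hj⟩ := hv (o + i) (by omega)
  exact ⟨j, by simpa only [_root_.window, add_assoc] using hj⟩

theorem eq_of_forall_lt_of_window_eq {v v' : Fin m → α} {o : ℕ} (ho : o ≤ m)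
    (hpre : ∀ i : Fin m, (i : ℕ) < o → v i = v' i)
    (hsuf : window v o (m - o) (by omega) = window v' o (m - o) (by omega)) : v = v' := by
  funext i
  rcases lt_or_ge (i : ℕ) o with hio | hoi
  · exact hpre i hio
  · simpa only [window, Nat.add_sub_cancel' hoi] using congrFun hsuf ⟨i - o, by omega⟩

open Finset in
/-- Splitting at the first symbol different from `z`, which occurs among the first `t`. -/
theorem card_rllOk_le_sum [Fintype α] (z : α) {t : ℕ} (htm : t ≤ m) :
    Nat.card {v : Fin m → α // RLLok z t v} ≤
      ∑ k ∈ range t,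
        (Fintype.card α - 1) * Nat.card {w : Fin (m - (k + 1)) → α // RLLok z t w} := by
  classical
  simp only [Nat.card_eq_fintype_card, Fintype.card_subtype]
  let piece (k : ℕ) : Finset (Fin m → α) := {v | RLLok z t v ∧
    (∀ i : Fin m, (i : ℕ) < k → v i = z) ∧ ∃ hk : k < m, v ⟨k, hk⟩ ≠ z}
  have hcover : ({v | RLLok z t v} : Finset (Fin m → α)) ⊆ (range t).biUnion piece := by
    intro v hv
    rw [mem_filter] at hv
    obtain ⟨j, hj⟩ := hv.2 0 (by omega)
    have hjz : v ⟨j, by omega⟩ ≠ z := by simpa only [window, zero_add] using hj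
    have hex : ∃ k, ∃ hk : k < m, v ⟨k, hk⟩ ≠ z := ⟨j, _, hjz⟩
    have hjt : Nat.find hex < t := (Nat.find_min' hex ⟨_, hjz⟩).trans_lt j.2
    refine mem_biUnion.2
      ⟨_, mem_range.2 hjt, mem_filter.2 ⟨mem_univ _, hv.2, ?_, Nat.find_spec hex⟩⟩
    intro i hi
    by_contra hne
    exact Nat.find_min hex hi ⟨i.2, hne⟩
  refine (card_le_card hcover).trans (card_biUnion_le.trans (sum_le_sum fun k hk => ?_))
  have hkm : k < m := (mem_range.1 hk).trans_le htm
  rw [← card_univ, ← card_erase_of_mem (mem_univ z), ← filter_ne', ← card_product]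
  refine card_le_card_of_injOn
    (fun v => (v ⟨k, hkm⟩, window v (k + 1) (m - (k + 1)) (by omega))) ?_ ?_
  · intro v hv
    simp only [piece, coe_filter, Set.mem_ofPred_eq, mem_univ, true_and] at hv
    obtain ⟨hrll, -, _, hne⟩ := hv
    simp only [coe_product, coe_filter, Set.mem_prod, Set.mem_ofPred_eq, mem_univ, true_and]
    exact ⟨hne, hrll.window _ _ _⟩
  · intro v hv v' hv' h
    simp only [piece, coe_filter, Set.mem_ofPred_eq, mem_univ, true_and] at hv hv'
    simp only [Prod.mk.injEq] at h
    refine eq_of_forall_lt_of_window_eq (by omega : k + 1 ≤ m) (fun i hi => ?_) h.2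
    rcases (Nat.lt_succ_iff.1 hi).lt_or_eq with hik | rfl
    · rw [hv.2.1 i hik, hv'.2.1 i hik]
    · exact h.1

end RunLength

section Rate

noncomputable def rllRate (q : ℝ) (t : ℕ) : ℝ := q * (1 - (q ^ (t + 1))⁻¹)

variable {q : ℝ} {t : ℕ}

theorem rllRate_le (hq : 0 ≤ q) : rllRate q t ≤ q :=
  mul_le_of_le_one_right hq (sub_le_self _ (by positivity))

theorem rllRate_pos (hq : 1 < q) : 0 < rllRate q t :=
  mul_pos (by linarith)
    (sub_pos.2 (inv_lt_one_of_one_lt₀ (one_lt_pow₀ hq (Nat.succ_ne_zero t))))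

theorem self_sub_rllRate (hq : 0 < q) : q - rllRate q t = (q ^ t)⁻¹ := by
  rw [rllRate, pow_succ]
  field_simp
  ring

theorem one_lt_rllRate (hq : 2 ≤ q) (ht : 0 < t) : 1 < rllRate q t := by
  have h : (q ^ t)⁻¹ ≤ 2⁻¹ :=
    inv_anti₀ (by norm_num) (hq.trans (le_self_pow₀ (by linarith) ht.ne'))
  linarith [self_sub_rllRate (t := t) (by linarith : 0 < q)]

theorem pow_le_two_mul_rllRate_pow (hq : 2 ≤ q) {m : ℕ} (hmt : m ≤ t) :
    q ^ m ≤ 2 * rllRate q t ^ m := by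
  set ε := (q ^ (t + 1))⁻¹ with hε
  have htq : (t : ℝ) ≤ q ^ t := calc
    (t : ℝ) ≤ 2 ^ t := by exact_mod_cast Nat.lt_two_pow_self.le
    _ ≤ q ^ t := pow_le_pow_left₀ (by norm_num) hq t
  have hmε : (m : ℝ) * ε ≤ 2⁻¹ := calc
    (m : ℝ) * ε ≤ t * ε := by gcongr
    _ ≤ q ^ t * ε := by gcongr
    _ = q⁻¹ := by
      rw [hε, pow_succ, mul_inv, ← mul_assoc, mul_inv_cancel₀ (by positivity), one_mul]
    _ ≤ 2⁻¹ := inv_anti₀ (by norm_num) hq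
  have hε1 : ε ≤ 1 := inv_le_one_of_one_le₀ (one_le_pow₀ (by linarith))
  have hbern : 1 - m * ε ≤ (1 - ε) ^ m := by
    simpa [sub_eq_add_neg, mul_comm] using one_add_mul_le_pow (a := -ε) (by linarith) m
  rw [rllRate, mul_pow]
  nlinarith [pow_pos (by linarith : 0 < q) m]

/-- The rate is chosen exactly so that this holds, via `λᵗ (q - λ) ≤ 1`. -/
theorem sub_one_mul_geom_sum_rllRate_le (hq : 2 ≤ q) (ht : 0 < t) :
    (q - 1) * ∑ j ∈ Finset.range t, rllRate q t ^ j ≤ rllRate q t ^ t := by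
  set r := rllRate q t
  have hr : 1 < r := one_lt_rllRate hq ht
  have hrt : r ^ t * (q - r) ≤ 1 := by
    rw [self_sub_rllRate (by linarith), ← div_eq_mul_inv, div_le_one (by positivity)]
    exact pow_le_pow_left₀ (by linarith) (rllRate_le (by linarith)) t
  rw [← mul_le_mul_iff_left₀ (sub_pos.2 hr), mul_assoc, geom_sum_mul]
  nlinarith

end Rate

open Finset in
theorem sum_range_pow_sub_succ {R : Type*} [CommSemiring R] (x : R) {t m : ℕ} (htm : t ≤ m) :
    ∑ k ∈ range t, x ^ (m - (k + 1)) = x ^ (m - t) * ∑ j ∈ range t, x ^ j := by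
  rw [mul_sum, ← sum_range_reflect]
  refine sum_congr rfl fun k hk => ?_
  rw [← pow_add]
  congr 1
  have := mem_range.1 hk
  omega

theorem card_rllOk_le {α : Type*} [Fintype α] (hα : 2 ≤ Fintype.card α) (z : α) {t : ℕ}
    (ht : 0 < t) (m : ℕ) :
    (Nat.card {v : Fin m → α // RLLok z t v} : ℝ) ≤ 2 * rllRate (Fintype.card α) t ^ m := by
  have hq : (2 : ℝ) ≤ Fintype.card α := by exact_mod_cast hα
  set q : ℝ := (Fintype.card α : ℝ)
  set r := rllRate q t
  have hr : 0 < r := rllRate_pos (by linarith)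
  induction m using Nat.strong_induction_on with
  | _ m ih =>
    rcases lt_or_ge m t with hmt | htm
    · calc (Nat.card {v : Fin m → α // RLLok z t v} : ℝ)
          ≤ Nat.card (Fin m → α) := by
            exact_mod_cast Nat.card_le_card_of_injective _ Subtype.val_injective
        _ = q ^ m := by simp [q]
        _ ≤ 2 * r ^ m := pow_le_two_mul_rllRate_pow hq hmt.le
    · calc (Nat.card {v : Fin m → α // RLLok z t v} : ℝ)
          ≤ ∑ k ∈ Finset.range t,
              (q - 1) * Nat.card {w : Fin (m - (k + 1)) → α // RLLok z t w} := by
            have h := card_rllOk_le_sum z htm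
            rw [← Nat.cast_le (α := ℝ)] at h
            push_cast [Nat.cast_sub (by omega : 1 ≤ Fintype.card α)] at h
            exact h
        _ ≤ ∑ k ∈ Finset.range t, (q - 1) * (2 * r ^ (m - (k + 1))) := by
            gcongr with k hk
            · linarith
            · exact ih _ (by omega)
        _ = 2 * r ^ (m - t) * ((q - 1) * ∑ j ∈ Finset.range t, r ^ j) := by
            rw [← Finset.mul_sum, ← Finset.mul_sum, sum_range_pow_sub_succ r htm]
            ring
        _ ≤ 2 * r ^ (m - t) * r ^ t := by
            have := sub_one_mul_geom_sum_rllRate_le hq ht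
            gcongr
        _ = 2 * r ^ m := by rw [mul_assoc, ← pow_add, Nat.sub_add_cancel htm]

theorem mul_le_log_of_one_le_mul_one_sub_pow {ε C : ℝ} {M : ℕ} (hε : ε ≤ 1)
    (h : 1 ≤ C * (1 - ε) ^ M) : ε * M ≤ Real.log C := by
  have hpow : (1 - ε) ^ M ≤ Real.exp (-(ε * M)) := by
    rw [neg_mul_eq_neg_mul, mul_comm, Real.exp_nat_mul]
    exact pow_le_pow_left₀ (sub_nonneg.2 hε) (Real.one_sub_le_exp_neg ε) M
  have hC : 0 < C := by
    by_contra! hC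
    nlinarith [pow_nonneg (sub_nonneg.2 hε) M]
  rw [Real.le_log_iff_exp_le hC]
  calc Real.exp (ε * M) = Real.exp (ε * M) * 1 := (mul_one _).symm
    _ ≤ Real.exp (ε * M) * (C * Real.exp (-(ε * M))) := by gcongr; nlinarith
    _ = C := by rw [mul_left_comm, ← Real.exp_add, add_neg_cancel, Real.exp_zero, mul_one]

/-- Since `λ = q (1 - q⁻⁽ᵗ⁺¹⁾)`, the hypothesis gives `M q⁻⁽ᵗ⁺¹⁾ ≤ log (2q) ≤ q`. -/
theorem le_pow_of_pow_le_two_mul_rllRate_pow {q : ℝ} (hq : 2 ≤ q) {t M : ℕ}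
    (h : q ^ M ≤ 2 * rllRate q t ^ (M + 1)) : (M : ℝ) ≤ q ^ (t + 2) := by
  set ε := (q ^ (t + 1))⁻¹ with hε
  have hq0 : 0 < q := by linarith
  have hε1 : ε ≤ 1 := inv_le_one_of_one_le₀ (one_le_pow₀ (by linarith))
  have hone : 1 ≤ 2 * q * (1 - ε) ^ M := by
    have h' : q ^ M ≤ q ^ M * (2 * q * (1 - ε) ^ M) := calc
      q ^ M ≤ 2 * rllRate q t * rllRate q t ^ M := by rw [mul_assoc, ← pow_succ']; exact h
      _ ≤ 2 * q * rllRate q t ^ M := by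
        have := rllRate_pos (t := t) (by linarith : 1 < q)
        gcongr
        exact rllRate_le hq0.le
      _ = q ^ M * (2 * q * (1 - ε) ^ M) := by rw [rllRate, mul_pow]; ring
    exact le_of_mul_le_mul_left (by simpa using h') (pow_pos hq0 M)
  have hlog : Real.log (2 * q) ≤ q := by
    rw [Real.log_mul two_ne_zero hq0.ne']
    linarith [Real.log_le_sub_one_of_pos two_pos, Real.log_le_sub_one_of_pos hq0]
  calc (M : ℝ) = ε * M * q ^ (t + 1) := by rw [hε]; field_simp
    _ ≤ q * q ^ (t + 1) := by
      gcongr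
      exact (mul_le_log_of_one_le_mul_one_sub_pow hε1 hone).trans hlog
    _ = q ^ (t + 2) := by ring

theorem card_lpAvoiding_le {α : Type*} [Fintype α] (hα : 2 ≤ Fintype.card α) {N ℓ d : ℕ}
    (hd : 0 < d) (hdℓ : d < ℓ) (hdN : d ≤ N) :
    (Nat.card {s : Fin N → α // LPAvoiding ℓ (d + 1) s} : ℝ) ≤
      Fintype.card α ^ d * (2 * rllRate (Fintype.card α) (ℓ - d) ^ (N - d)) := by
  classical
  obtain ⟨z⟩ : Nonempty α := Fintype.card_pos_iff.1 (by omega)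
  have hperiod : Nat.card {s : Fin N → α // LPAvoiding ℓ (d + 1) s} ≤
      Nat.card {s : Fin N → α // PAvoiding ℓ d s} :=
    Nat.card_le_card_of_injective (Subtype.map id fun s hs i hi => hs i hi d hd d.lt_succ_self)
      (Subtype.map_injective _ Function.injective_id)
  calc (Nat.card {s : Fin N → α // LPAvoiding ℓ (d + 1) s} : ℝ)
      ≤ (Fintype.card α ^ d * Nat.card {v : Fin (N - d) → α // RLLok z (ℓ - d) v} : ℕ) := by
        exact_mod_cast hperiod.trans (card_pAvoiding_le z hd hdℓ hdN)
    _ ≤ _ := by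
        push_cast
        gcongr
        exact card_rllOk_le hα z (by omega) _

/-- If an `(ℓ,p)`-LPA code of length `n+1` with a single redundancy symbol
exists (i.e. `a_q(n+1, ℓ, p) ≥ q^n`), with `2 ≤ p ≤ ℓ` and `n ≥ 2ℓ − p + 1`,
then `ℓ ≥ log_q(n − 2ℓ + p) + p − 3.5`. -/
theorem single_redundancy_window_lower_bound
    {q : ℕ} (hq : 2 ≤ q) (Sigma : Type*) [Fintype Sigma]
    (hcard : Fintype.card Sigma = q)
    (n ℓ p : ℕ) (hp : 2 ≤ p) (hpl : p ≤ ℓ) (hn : 2 * ℓ - p + 1 ≤ n)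
    (hcode : Nat.card {s : Fin (n + 1) → Sigma // LPAvoiding ℓ p s} ≥ q ^ n) :
    (ℓ : ℝ) ≥ Real.logb q ((n : ℝ) - 2 * (ℓ : ℝ) + (p : ℝ)) + (p : ℝ) - 3.5 := by
  obtain ⟨d, rfl⟩ : ∃ d, p = d + 1 := ⟨p - 1, by omega⟩
  obtain ⟨M, rfl⟩ : ∃ M, n = d + M := ⟨n - d, by omega⟩
  have hcount :=
    card_lpAvoiding_le (hcard ▸ hq) (N := d + M + 1) (by omega : 0 < d) hpl (by omega)
  rw [show d + M + 1 - d = M + 1 by omega, hcard] at hcount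
  have hq2 : (2 : ℝ) ≤ q := by exact_mod_cast hq
  have hM : (M : ℝ) ≤ q ^ (ℓ - d + 2) := by
    refine le_pow_of_pow_le_two_mul_rllRate_pow hq2
      (le_of_mul_le_mul_left ?_ (by positivity : (0 : ℝ) < q ^ d))
    calc (q : ℝ) ^ d * q ^ M = (q ^ (d + M) : ℕ) := by push_cast; ring
      _ ≤ _ := (Nat.cast_le.2 hcode).trans hcount
  have hℓ : (d : ℝ) + 1 ≤ ℓ := by exact_mod_cast hpl
  have hX : (2 * ℓ + 1 : ℝ) ≤ d + M + (d + 1) := by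
    exact_mod_cast (by omega : 2 * ℓ + 1 ≤ d + M + (d + 1))
  have hlogb : Real.logb q (d + M - 2 * ℓ + (d + 1)) ≤ ((ℓ - d + 2 : ℕ) : ℝ) := by
    rw [Real.logb_le_iff_le_rpow (by linarith) (by linarith), Real.rpow_natCast]
    linarith
  push_cast [Nat.cast_sub (by omega : d ≤ ℓ)] at hlogb ⊢
  linarith
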